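/- Let G be an unweighted undirected graph with girth greater than 2k, and let s be a vertex. Then |V_s^k(G)| = 1 + Σ_{v ∈ N(s)} |V_v^{k−1}(G')| where G' = G \ {s}, i.e., the ball of radius k around s decomposes as a disjoint union of s and the balls of radius k−1 around the neighbors of s in G \ {s}. -/

import Mathlib

open SimpleGraph

variable {V : Type*}

/-- The set of vertices at distance at most `r` from `u` in `G`. -/
def vball (G : SimpleGraph V) (u : V) (r : ℕ) : Set V :=
  {w | ∃ p : G.Walk u w, p.length ≤ r}

/-- The set of edges at distance at most `r` from `u` in `G`, where the distance
from `u` to an edge is one more than the distance to its closer endpoint. -/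
def eball (G : SimpleGraph V) (u : V) (r : ℕ) : Set (Sym2 V) :=
  {e | e ∈ G.edgeSet ∧ ∃ a ∈ e, ∃ p : G.Walk u a, p.length + 1 ≤ r}

/-- The ball graph `B(v,R)`: vertices at distance ≤ R from `v` together with
all edges at distance ≤ R from `v`, as a subgraph of `G`. -/
def ballSub (G : SimpleGraph V) (v : V) (R : ℕ) : G.Subgraph where
  verts := vball G v R
  Adj a b := G.Adj a b ∧
    ((∃ p : G.Walk v a, p.length + 1 ≤ R) ∨ (∃ p : G.Walk v b, p.length + 1 ≤ R))
  adj_sub h := h.1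
  edge_vert := by
    rintro a b ⟨hab, ⟨p, hp⟩ | ⟨p, hp⟩⟩
    · exact ⟨p, by omega⟩
    · exact ⟨p.concat hab.symm, by rw [SimpleGraph.Walk.length_concat]; omega⟩
  symm := by
    refine ⟨?_⟩
    rintro a b ⟨hab, h⟩
    exact ⟨hab.symm, h.symm⟩

/-- The graph `G \ {s}`: delete the vertex `s` together with its incident edges. -/
def delVert (G : SimpleGraph V) (s : V) : SimpleGraph V where
  Adj a b := G.Adj a b ∧ a ≠ s ∧ b ≠ s
  symm := by refine ⟨?_⟩; rintro a b ⟨h, ha, hb⟩; exact ⟨h.symm, hb, ha⟩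
  loopless := by refine ⟨?_⟩; rintro a ⟨h, _, _⟩; exact G.loopless.irrefl a h

/-- The set of vertices at distance exactly `r` from `u` in `G`. -/
def vsphere (G : SimpleGraph V) (u : V) (r : ℕ) : Set V :=
  {w | (∃ p : G.Walk u w, p.length = r) ∧ ∀ q : G.Walk u w, r ≤ q.length}

lemma delVert_le (G : SimpleGraph V) (s : V) : delVert G s ≤ G := fun _ _ h => h.1

lemma delVert_walk_end' {G : SimpleGraph V} {s a b : V} (q : (delVert G s).Walk a b) :
    b = s → a = s := by
  induction q with
  | nil => exact id
  | cons h _ ih => intro hb; exact absurd (ih hb) h.2.2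

lemma delVert_walk_end {G : SimpleGraph V} {s a : V} (q : (delVert G s).Walk a s) : a = s :=
  delVert_walk_end' q rfl

lemma delVert_walk_support {G : SimpleGraph V} {s a b : V} (q : (delVert G s).Walk a b)
    (hs : s ∈ q.support) : s = a ∨ s = b := by
  induction q with
  | nil => exact Or.inl (by simpa using hs)
  | cons h q ih =>
    rw [SimpleGraph.Walk.support_cons] at hs
    rcases List.mem_cons.mp hs with h1 | h2
    · exact Or.inl h1
    · rcases ih h2 with h3 | h3
      · exact absurd h3.symm h.2.2
      · exact Or.inr h3

lemma edges_mem_delVert {G : SimpleGraph V} {s a b : V} (q : G.Walk a b)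
    (hs : s ∉ q.support) : ∀ e ∈ q.edges, e ∈ (delVert G s).edgeSet := by
  intro e he
  induction e using Sym2.ind with
  | _ x y =>
    refine ⟨q.edges_subset_edgeSet he, fun hx => hs (hx ▸ q.fst_mem_support_of_mem_edges he),
      fun hy => hs (hy ▸ q.snd_mem_support_of_mem_edges he)⟩

lemma cons_of_path {G : SimpleGraph V} {s w : V} (hws : w ≠ s) (P : G.Walk s w) :
    ∃ (v : V) (h : G.Adj s v) (q : G.Walk v w), P = SimpleGraph.Walk.cons h q := by
  cases P with
  | nil => exact absurd rfl hws
  | cons h q => exact ⟨_, h, q, rfl⟩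

lemma two_paths [DecidableEq V] {G : SimpleGraph V} :
    ∀ (n : ℕ) {u v : V} (p q : G.Walk u v), p.length + q.length ≤ n →
    p.IsPath → q.IsPath → p ≠ q →
    ∃ (a : V) (c : G.Walk a a), c.IsCycle ∧ c.length ≤ p.length + q.length := by
  intro n
  induction n with
  | zero =>
    intro u v p q hlen hp hq hne
    cases p with
    | nil =>
      cases q with
      | nil => exact absurd rfl hne
      | cons h q' => simp [SimpleGraph.Walk.length_cons] at hlen
    | cons h p' => simp [SimpleGraph.Walk.length_cons] at hlen
  | succ n ih =>
    intro u v p q hlen hp hq hne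
    cases p with
    | nil =>
      have hq' := SimpleGraph.Walk.isPath_iff_eq_nil.mp hq
      exact absurd hq'.symm hne
    | @cons _ a _ h p' =>
      cases q with
      | nil =>
        have := SimpleGraph.Walk.isPath_iff_eq_nil.mp hp
        simp at this
      | @cons _ b _ h' q' =>
        by_cases hab : a = b
        · subst hab
          have hne' : p' ≠ q' := fun e => hne (by rw [e])
          obtain ⟨x, c, hc, hcl⟩ := ih p' q'
            (by simp only [SimpleGraph.Walk.length_cons] at hlen; omega)
            hp.of_cons hq.of_cons hne'
          exact ⟨x, c, hc, by simp only [SimpleGraph.Walk.length_cons]; omega⟩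
        · obtain ⟨hp', hup'⟩ := (SimpleGraph.Walk.cons_isPath_iff _ _).mp hp
          obtain ⟨hq', huq'⟩ := (SimpleGraph.Walk.cons_isPath_iff _ _).mp hq
          set m : G.Walk a u := p'.append (SimpleGraph.Walk.cons h' q').reverse with hm
          have he : s(u, a) ∉ m.edges := by
            rw [hm]
            rw [SimpleGraph.Walk.edges_append, SimpleGraph.Walk.edges_reverse,
              SimpleGraph.Walk.edges_cons]
            intro hmem
            rcases List.mem_append.mp hmem with h1 | h2
            · exact hup' (p'.fst_mem_support_of_mem_edges h1)
            · rw [List.mem_reverse, List.mem_cons] at h2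
              rcases h2 with h3 | h4
              · rw [Sym2.eq_iff] at h3
                rcases h3 with ⟨_, h5⟩ | ⟨h5, h6⟩
                · exact hab h5
                · exact hab (h6.trans h5)
              · exact huq' (q'.fst_mem_support_of_mem_edges h4)
          have her : s(u, a) ∉ m.bypass.edges := fun hh => he (m.edges_bypass_subset hh)
          refine ⟨u, SimpleGraph.Walk.cons h m.bypass,
            (SimpleGraph.Walk.cons_isCycle_iff _ h).mpr ⟨m.bypass_isPath, her⟩, ?_⟩
          have h1 := m.length_bypass_le
          have h2 : m.length = p'.length + (q'.length + 1) := by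
            rw [hm, SimpleGraph.Walk.length_append, SimpleGraph.Walk.length_reverse,
              SimpleGraph.Walk.length_cons]
          simp only [SimpleGraph.Walk.length_cons]
          omega


/-- If the girth of `G` exceeds `2k`, then the ball of radius `k` around `s`
decomposes as a disjoint union of `{s}` and the balls of radius `k-1` around the
neighbors of `s` in `G \ {s}`; in particular the cardinalities add up. -/
theorem stmt_9 [Fintype V] [DecidableEq V] (G : SimpleGraph V) [DecidableRel G.Adj]
    (k : ℕ) (hk : 2 ≤ k) (hg : 2 * (k : ℕ∞) < G.girth) (s : V) :
    (vball G s k).ncard = 1 + ∑ v ∈ G.neighborFinset s, (vball (delVert G s) v (k - 1)).ncard := by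
  classical
  set G' := delVert G s with hG'
  set N := G.neighborFinset s with hN
  set B := fun v => vball G' v (k - 1) with hB
  -- girth in ℕ
  have hgn : 2 * k < G.girth := by
    have : ((2 * k : ℕ) : ℕ∞) < (G.girth : ℕ∞) := by
      push_cast
      exact hg
    exact_mod_cast this
  -- s is in no ball
  have hsnot : ∀ v ∈ N, s ∉ B v := by
    intro v hv ⟨q, _⟩
    have hvs : v = s := delVert_walk_end q
    have hadj : G.Adj s v := (G.mem_neighborFinset s v).mp hv
    exact hadj.ne' (hvs ▸ rfl)
  -- the decomposition
  have hset : vball G s k = insert s (⋃ v ∈ N, B v) := by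
    ext w
    constructor
    · rintro ⟨p, hp⟩
      by_cases hws : w = s
      · subst hws; exact Set.mem_insert _ _
      · obtain ⟨v, hadj, q, hPq⟩ := cons_of_path hws p.bypass
        have hPath : p.bypass.IsPath := p.bypass_isPath
        have hPlen : p.bypass.length ≤ k := le_trans p.length_bypass_le hp
        rw [hPq] at hPath hPlen
        obtain ⟨hqpath, hsq⟩ := (SimpleGraph.Walk.cons_isPath_iff _ _).mp hPath
        rw [SimpleGraph.Walk.length_cons] at hPlen
        have : w ∈ B v :=
          ⟨q.transfer G' (edges_mem_delVert q hsq), by rw [SimpleGraph.Walk.length_transfer]; omega⟩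
        exact Set.mem_insert_of_mem _ (Set.mem_biUnion ((G.mem_neighborFinset s v).mpr hadj) this)
    · intro hw
      rcases Set.mem_insert_iff.mp hw with rfl | hw
      · exact ⟨SimpleGraph.Walk.nil, by simp⟩
      · obtain ⟨v, hv, q, hql⟩ := Set.mem_iUnion₂.mp hw
        have hadj : G.Adj s v := (G.mem_neighborFinset s v).mp hv
        refine ⟨SimpleGraph.Walk.cons hadj
          (q.transfer G (fun e he => SimpleGraph.edgeSet_mono (delVert_le G s)
            (q.edges_subset_edgeSet he))), ?_⟩
        rw [SimpleGraph.Walk.length_cons, SimpleGraph.Walk.length_transfer]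
        omega
  -- pairwise disjointness of the balls
  have hdisj : ∀ v₁ ∈ N, ∀ v₂ ∈ N, v₁ ≠ v₂ → ∀ w, w ∈ B v₁ → w ∈ B v₂ → False := by
    intro v₁ hv₁ v₂ hv₂ hne w hw₁ hw₂
    obtain ⟨q₁, hq₁⟩ := hw₁
    obtain ⟨q₂, hq₂⟩ := hw₂
    have hadj₁ : G.Adj s v₁ := (G.mem_neighborFinset s v₁).mp hv₁
    have hadj₂ : G.Adj s v₂ := (G.mem_neighborFinset s v₂).mp hv₂
    have hwns : w ≠ s := fun h => hadj₁.ne' (delVert_walk_end (h ▸ q₁))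
    -- bypass to paths, transfer to G
    have hsupp : ∀ {v : V}, G.Adj s v → ∀ (r : G'.Walk v w), s ∉ r.support := by
      intro v hadj r hs
      rcases delVert_walk_support r hs with h | h
      · exact hadj.ne' h.symm
      · exact hwns h.symm
    set t₁ : G.Walk v₁ w := q₁.bypass.transfer G (fun e he =>
      SimpleGraph.edgeSet_mono (delVert_le G s) (q₁.bypass.edges_subset_edgeSet he)) with ht₁
    set t₂ : G.Walk v₂ w := q₂.bypass.transfer G (fun e he =>
      SimpleGraph.edgeSet_mono (delVert_le G s) (q₂.bypass.edges_subset_edgeSet he)) with ht₂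
    have ht₁p : t₁.IsPath := q₁.bypass_isPath.transfer _
    have ht₂p : t₂.IsPath := q₂.bypass_isPath.transfer _
    have ht₁s : s ∉ t₁.support := by
      rw [ht₁, SimpleGraph.Walk.support_transfer]
      exact fun hs => hsupp hadj₁ _ hs
    have ht₂s : s ∉ t₂.support := by
      rw [ht₂, SimpleGraph.Walk.support_transfer]
      exact fun hs => hsupp hadj₂ _ hs
    have ht₁l : t₁.length ≤ k - 1 := by
      rw [ht₁, SimpleGraph.Walk.length_transfer]
      exact le_trans q₁.length_bypass_le hq₁
    have ht₂l : t₂.length ≤ k - 1 := by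
      rw [ht₂, SimpleGraph.Walk.length_transfer]
      exact le_trans q₂.length_bypass_le hq₂
    set P₁ : G.Walk s w := SimpleGraph.Walk.cons hadj₁ t₁ with hP₁
    set P₂ : G.Walk s w := SimpleGraph.Walk.cons hadj₂ t₂ with hP₂
    have hP₁p : P₁.IsPath := (SimpleGraph.Walk.cons_isPath_iff _ _).mpr ⟨ht₁p, ht₁s⟩
    have hP₂p : P₂.IsPath := (SimpleGraph.Walk.cons_isPath_iff _ _).mpr ⟨ht₂p, ht₂s⟩
    have hPne : P₁ ≠ P₂ := by
      intro hEq
      have := congrArg SimpleGraph.Walk.support hEq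
      rw [hP₁, hP₂, SimpleGraph.Walk.support_cons, SimpleGraph.Walk.support_cons,
        t₁.support_eq_cons, t₂.support_eq_cons] at this
      simp only [List.cons.injEq] at this
      exact hne this.2.1
    obtain ⟨x, c, hc, hcl⟩ := two_paths (P₁.length + P₂.length) P₁ P₂ le_rfl hP₁p hP₂p hPne
    have hgirth : (G.egirth : ℕ∞) ≤ c.length := le_egirth.mp le_rfl x c hc
    have : G.girth ≤ c.length := by
      have := ENat.toNat_le_toNat hgirth (by simp)
      simpa [SimpleGraph.girth] using this
    have hlen : P₁.length + P₂.length ≤ 2 * k := by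
      rw [hP₁, hP₂, SimpleGraph.Walk.length_cons, SimpleGraph.Walk.length_cons]
      omega
    omega
  -- counting
  have hfin : ∀ v, (B v).Finite := fun v => Set.toFinite _
  set F : V → Finset V := fun v => (hfin v).toFinset with hF
  have hUcoe : (⋃ v ∈ N, B v) = ↑(N.biUnion F) := by
    rw [Finset.coe_biUnion]
    simp only [hF, Set.Finite.coe_toFinset, Finset.mem_coe]
  have hsnotU : s ∉ ⋃ v ∈ N, B v := by
    intro hs
    obtain ⟨v, hv, hmem⟩ := Set.mem_iUnion₂.mp hs
    exact hsnot v hv hmem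
  rw [hset, Set.ncard_insert_of_notMem hsnotU (Set.toFinite _), hUcoe, Set.ncard_coe_finset,
    Finset.card_biUnion]
  · rw [Nat.add_comm]
    congr 1
    refine Finset.sum_congr rfl fun v hv => ?_
    rw [hF]
    exact ((B v).ncard_eq_toFinset_card (hfin v)).symm
  · intro v₁ hv₁ v₂ hv₂ hne
    rw [Function.onFun, Finset.disjoint_left]
    intro a ha₁ ha₂
    rw [hF, Set.Finite.mem_toFinset] at ha₁ ha₂
    exact hdisj v₁ hv₁ v₂ hv₂ hne a ha₁ ha₂
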